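/- Let E be a complex Banach space, ℰ a bounded open sector at 0, and f, g : ℰ → E holomorphic, both admitting the same formal series f̂ ∈ E[[ε]] as Gevrey asymptotic expansion of order α > 0 on ℰ. Then f − g is exponentially flat of order α: for every closed proper subsector W ⊆ ℰ there exist K, M > 0 with ‖f(ε) − g(ε)‖ ≤ K exp(−M/|ε|^α) for all ε ∈ W. -/

import Mathlib

/-!
Both `f` and `g` differ from the same partial sum by a remainder of size
`C M^N (N!)^{1/α} |ε|^N`, so `‖f ε - g ε‖` obeys this bound for every `N ≥ 1`.
Since `(N!)^{1/α} ≤ (N^{1/α})^N`, the bound at `N = ⌊e⁻¹ (M |ε|)^{-α}⌋` is at most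
`C e^{-N/α}` (when that `N` is `0`, use `N = 1` instead, giving `C M |ε|`), and
`e^{-N/α} ≤ e^{1/α} exp(-(e⁻¹ M^{-α} / α) / |ε|^α)`.
-/

/-- The open sector at the origin with radius `R` and angles in `(a, b)`. -/
noncomputable def Sector18 (R a b : ℝ) : Set ℂ :=
  {ε : ℂ | ε ≠ 0 ∧ ‖ε‖ < R ∧
    ∃ φ : ℝ, a < φ ∧ φ < b ∧ ε = (‖ε‖ : ℂ) * Complex.exp ((φ : ℂ) * Complex.I)}

/-- A closed subsector: radius `≤ R`, angles in `[a, b]`. -/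
noncomputable def ClosedSector18 (R a b : ℝ) : Set ℂ :=
  {ε : ℂ | ε ≠ 0 ∧ ‖ε‖ ≤ R ∧
    ∃ φ : ℝ, a ≤ φ ∧ φ ≤ b ∧ ε = (‖ε‖ : ℂ) * Complex.exp ((φ : ℂ) * Complex.I)}

/-- `f` admits the formal series with coefficients `c` as Gevrey asymptotic expansion of
order `α` on the sector of radius `R` and angles `(a,b)`. -/
def HasGevreyExpansion18 (E : Type*) [NormedAddCommGroup E] [NormedSpace ℂ E]
    (α R a b : ℝ) (f : ℂ → E) (c : ℕ → E) : Prop :=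
  ∀ R' a' b' : ℝ, 0 < R' → R' < R → a < a' → a' ≤ b' → b' < b →
    ∃ C > 0, ∃ M > 0, ∀ N : ℕ, 1 ≤ N → ∀ ε ∈ ClosedSector18 R' a' b',
      ‖f ε - ∑ j ∈ Finset.range N, ε ^ j • c j‖ ≤
        C * M ^ N * (Nat.factorial N : ℝ) ^ ((1 : ℝ) / α) * ‖ε‖ ^ N

open Real Nat

theorem HasGevreyExpansion18.sub {E : Type*} [NormedAddCommGroup E] [NormedSpace ℂ E]
    {α R a b : ℝ} {f g : ℂ → E} {c d : ℕ → E}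
    (hf : HasGevreyExpansion18 E α R a b f c) (hg : HasGevreyExpansion18 E α R a b g d) :
    HasGevreyExpansion18 E α R a b (f - g) (c - d) := by
  intro R' a' b' hR' hR'R ha' hab' hb'
  obtain ⟨C₁, hC₁, M₁, hM₁, h₁⟩ := hf R' a' b' hR' hR'R ha' hab' hb'
  obtain ⟨C₂, hC₂, M₂, hM₂, h₂⟩ := hg R' a' b' hR' hR'R ha' hab' hb'
  refine ⟨C₁ + C₂, by positivity, max M₁ M₂, lt_max_of_lt_left hM₁, fun N hN ε hε => ?_⟩
  have hsplit : (f - g) ε - ∑ j ∈ Finset.range N, ε ^ j • (c - d) j =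
      (f ε - ∑ j ∈ Finset.range N, ε ^ j • c j) - (g ε - ∑ j ∈ Finset.range N, ε ^ j • d j) := by
    simp only [Pi.sub_apply, smul_sub, Finset.sum_sub_distrib]
    abel
  have hM₁N : M₁ ^ N ≤ max M₁ M₂ ^ N := pow_le_pow_left₀ hM₁.le (le_max_left _ _) N
  have hM₂N : M₂ ^ N ≤ max M₁ M₂ ^ N := pow_le_pow_left₀ hM₂.le (le_max_right _ _) N
  calc ‖(f - g) ε - ∑ j ∈ Finset.range N, ε ^ j • (c - d) j‖
      ≤ C₁ * M₁ ^ N * (N ! : ℝ) ^ (1 / α) * ‖ε‖ ^ N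
        + C₂ * M₂ ^ N * (N ! : ℝ) ^ (1 / α) * ‖ε‖ ^ N :=
        hsplit ▸ (norm_sub_le _ _).trans (add_le_add (h₁ N hN ε hε) (h₂ N hN ε hε))
    _ ≤ C₁ * max M₁ M₂ ^ N * (N ! : ℝ) ^ (1 / α) * ‖ε‖ ^ N
        + C₂ * max M₁ M₂ ^ N * (N ! : ℝ) ^ (1 / α) * ‖ε‖ ^ N := by gcongr
    _ = (C₁ + C₂) * max M₁ M₂ ^ N * (N ! : ℝ) ^ (1 / α) * ‖ε‖ ^ N := by ring

theorem factorial_rpow_le_pow {p : ℝ} (hp : 0 ≤ p) (N : ℕ) :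
    (N ! : ℝ) ^ p ≤ ((N : ℝ) ^ p) ^ N := by
  rw [← Real.rpow_natCast ((N : ℝ) ^ p), ← Real.rpow_mul (Nat.cast_nonneg _), mul_comm,
    Real.rpow_mul (Nat.cast_nonneg _), Real.rpow_natCast]
  exact Real.rpow_le_rpow (Nat.cast_nonneg _) (mod_cast N.factorial_le_pow) hp

theorem gevrey_term_le_exp {α M r : ℝ} (hα : 0 < α) (hM : 0 < M) (hr : 0 < r) {N : ℕ}
    (hN : (N : ℝ) * (M * r) ^ α ≤ exp (-1)) :
    M ^ N * (N ! : ℝ) ^ (1 / α) * r ^ N ≤ exp (-(N / α)) := by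
  have hbase : M * (N : ℝ) ^ (1 / α) * r ≤ exp (-(1 / α)) :=
    calc M * (N : ℝ) ^ (1 / α) * r = ((N : ℝ) * (M * r) ^ α) ^ (1 / α) := by
          rw [Real.mul_rpow (Nat.cast_nonneg N) (by positivity), ← Real.rpow_mul (by positivity),
            mul_one_div_cancel hα.ne', Real.rpow_one]
          ring
      _ ≤ exp (-1) ^ (1 / α) := by gcongr
      _ = exp (-(1 / α)) := by rw [← Real.exp_mul]; ring_nf
  calc M ^ N * (N ! : ℝ) ^ (1 / α) * r ^ N ≤ M ^ N * ((N : ℝ) ^ (1 / α)) ^ N * r ^ N := by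
        gcongr; exact factorial_rpow_le_pow (by positivity) N
    _ = (M * (N : ℝ) ^ (1 / α) * r) ^ N := by ring
    _ ≤ exp (-(1 / α)) ^ N := by gcongr
    _ = exp (-(N / α)) := by rw [← Real.exp_nat_mul]; ring_nf

theorem le_mul_exp_of_forall_le_gevrey {α C M r x : ℝ} (hα : 0 < α) (hC : 0 ≤ C) (hM : 0 < M)
    (hr : 0 < r) (h : ∀ N : ℕ, 1 ≤ N → x ≤ C * M ^ N * (N ! : ℝ) ^ (1 / α) * r ^ N) :
    x ≤ C * max 1 (M * r) * exp (1 / α) * exp (-(exp (-1) / (α * M ^ α)) / r ^ α) := by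
  set t := exp (-1) / (M * r) ^ α
  have hMr : 0 < (M * r) ^ α := by positivity
  have hexponent : -(exp (-1) / (α * M ^ α)) / r ^ α = -(t / α) := by
    simp only [t, Real.mul_rpow hM.le hr.le]
    field_simp
  set N := ⌊t⌋₊
  have htN : t < N + 1 := Nat.lt_floor_add_one t
  have hxN : x ≤ C * max 1 (M * r) * exp (-(N / α)) := by
    rcases Nat.eq_zero_or_pos N with hN | hN
    · have h₁ := h 1 le_rfl
      simp only [pow_one, Nat.factorial_one, Nat.cast_one, Real.one_rpow, mul_one] at h₁
      simp only [hN, CharP.cast_eq_zero, zero_div, neg_zero, Real.exp_zero, mul_one]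
      calc x ≤ C * (M * r) := by linarith
        _ ≤ C * max 1 (M * r) := by gcongr; exact le_max_right _ _
    · have hNt : (N : ℝ) * (M * r) ^ α ≤ exp (-1) :=
        (le_div_iff₀ hMr).mp (Nat.floor_le (by positivity))
      calc x ≤ C * (M ^ N * (N ! : ℝ) ^ (1 / α) * r ^ N) := by linarith [h N hN]
        _ ≤ C * exp (-(N / α)) := by gcongr; exact gevrey_term_le_exp hα hM hr hNt
        _ = C * 1 * exp (-(N / α)) := by ring
        _ ≤ C * max 1 (M * r) * exp (-(N / α)) := by gcongr; exact le_max_left _ _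
  calc x ≤ C * max 1 (M * r) * exp (-(N / α)) := hxN
    _ ≤ C * max 1 (M * r) * (exp (1 / α) * exp (-(t / α))) := by
        rw [← Real.exp_add]
        gcongr
        have hdiv : (t - 1) / α ≤ N / α := by gcongr; linarith
        linarith [show (t - 1) / α = t / α - 1 / α by ring]
    _ = _ := by rw [hexponent]; ring

theorem stmt_18_general (E : Type*) [NormedAddCommGroup E] [NormedSpace ℂ E]
    (R a b α : ℝ) (hα : 0 < α)
    (f g : ℂ → E) (c : ℕ → E)
    (hf : HasGevreyExpansion18 E α R a b f c)
    (hg : HasGevreyExpansion18 E α R a b g c) :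
    ∀ R' a' b' : ℝ, 0 < R' → R' < R → a < a' → a' ≤ b' → b' < b →
      ∃ K > 0, ∃ M > 0, ∀ ε ∈ ClosedSector18 R' a' b',
        ‖f ε - g ε‖ ≤ K * Real.exp (-M / ‖ε‖ ^ α) := by
  intro R' a' b' hR' hR'R ha' hab' hb'
  obtain ⟨C, hC, M, hM, hbound⟩ := hf.sub hg R' a' b' hR' hR'R ha' hab' hb'
  refine ⟨C * max 1 (M * R') * exp (1 / α), by positivity, exp (-1) / (α * M ^ α),
    by positivity, fun ε hε => ?_⟩
  have hflat := le_mul_exp_of_forall_le_gevrey hα hC.le hM (norm_pos_iff.mpr hε.1) fun N hN => by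
    simpa using hbound N hN ε hε
  refine hflat.trans ?_
  gcongr
  exact hε.2.1

/-- If two holomorphic functions on a sector admit the same Gevrey asymptotic expansion
of order `α`, their difference is exponentially flat of order `α` on every closed proper
subsector. -/
theorem stmt_18 (E : Type*) [NormedAddCommGroup E] [NormedSpace ℂ E]
    (R a b α : ℝ) (hR : 0 < R) (hab : a < b) (hα : 0 < α)
    (f g : ℂ → E) (c : ℕ → E)
    (hfhol : DifferentiableOn ℂ f (Sector18 R a b))
    (hghol : DifferentiableOn ℂ g (Sector18 R a b))
    (hf : HasGevreyExpansion18 E α R a b f c)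
    (hg : HasGevreyExpansion18 E α R a b g c) :
    ∀ R' a' b' : ℝ, 0 < R' → R' < R → a < a' → a' ≤ b' → b' < b →
      ∃ K > 0, ∃ M > 0, ∀ ε ∈ ClosedSector18 R' a' b',
        ‖f ε - g ε‖ ≤ K * Real.exp (-M / ‖ε‖ ^ α) :=
  stmt_18_general E R a b α hα f g c hf hg
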